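/- Let k ≥ 2 be an integer and let G be a finite simple graph whose vertex set is the union of two sets V_1 and V_2 such that: V_1 ∩ V_2 is a clique of G of size k, and there is no edge of G between a vertex of V_1 \ V_2 and a vertex of V_2 \ V_1. Let G_1 and G_2 be the subgraphs of G induced by V_1 and V_2, respectively (so G is a k-clique-sum of G_1 and G_2). Then meg(G_1) + meg(G_2) - 2k ≤ meg(G) ≤ meg(G_1) + meg(G_2). -/

import Mathlib

open SimpleGraph

/-- A pair of vertices `u`, `v` monitors an edge `e` if `u` and `v` are reachable from
each other and `e` belongs to every shortest path (walk of length `G.dist u v`)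
between `u` and `v`. -/
def Monitors {V : Type*} (G : SimpleGraph V) (u v : V) (e : Sym2 V) : Prop :=
  G.Reachable u v ∧ ∀ p : G.Walk u v, p.length = G.dist u v → e ∈ p.edges

/-- A monitoring edge-geodetic set of `G`: every edge of `G` is monitored by some
pair of vertices of `M`. -/
def IsMEGSet {V : Type*} (G : SimpleGraph V) (M : Set V) : Prop :=
  ∀ e ∈ G.edgeSet, ∃ u ∈ M, ∃ v ∈ M, Monitors G u v e

/-- The monitoring edge-geodetic number of `G`: the minimum size of an MEG-set. -/
noncomputable def meg {V : Type*} [Fintype V] (G : SimpleGraph V) : ℕ :=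
  sInf {n : ℕ | ∃ M : Finset V, IsMEGSet G ↑M ∧ M.card = n}

/-!
Since `s ∩ t` is a clique separating `s \ t` from `t \ s`, a walk between two vertices of `s`
that visits `x ∉ s` leaves `s` and comes back through clique vertices `c`, `c'`; replacing the
detour by the walk through `c c'` shortens it. So `s` is geodesically convex, `G[s]` is an
isometric subgraph of `G`, and monitoring in `G[s]` is monitoring in `G`.

Upper bound: every edge of `G` lies in `G[s]` or `G[t]`, so MEG-sets of the two sides together
monitor `G`. Lower bound: if `u ∉ s` monitors an edge of `G[s]` together with `v`, so does the
clique vertex where a `u`–`v` geodesic first enters `s`. Hence for an MEG-set `M` of `G`, the set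
`s ∩ (M ∪ t)` is an MEG-set of `G[s]`, and the two clique copies cost at most `2 |s ∩ t|`.
-/

section CliqueSum

variable {V : Type*} {G : SimpleGraph V}

theorem Monitors.symm {u v : V} {e : Sym2 V} (h : Monitors G u v e) : Monitors G v u e := by
  refine ⟨h.1.symm, fun p hp => ?_⟩
  simpa using h.2 p.reverse (by rw [Walk.length_reverse, hp, dist_comm])

theorem monitors_of_adj {u v : V} (h : G.Adj u v) : Monitors G u v s(u, v) := by
  refine ⟨h.reachable, fun p hp => ?_⟩
  rw [dist_eq_one_iff_adj.2 h] at hp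
  cases p with
  | nil => simp at hp
  | cons h' q =>
    obtain rfl : _ = v := Walk.eq_of_length_eq_zero (by simpa using hp)
    simp

theorem Monitors.of_append {u c v : V} {e : Sym2 V} (h : Monitors G u v e)
    (p₁ : G.Walk u c) (p₂ : G.Walk c v) (hp : (p₁.append p₂).length = G.dist u v)
    (he : e ∉ p₁.edges) : Monitors G c v e := by
  refine ⟨p₂.reachable, fun q hq => ?_⟩
  have hlen : (p₁.append q).length = G.dist u v := by
    have h₁ := dist_le (p₁.append q)
    have h₂ := dist_le p₂
    rw [Walk.length_append] at hp h₁ ⊢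
    omega
  simpa [Walk.edges_append, he] using h.2 _ hlen

theorem isMEGSet_univ : IsMEGSet G Set.univ := by
  intro e he
  induction e using Sym2.ind with
  | _ u v => exact ⟨u, trivial, v, trivial, monitors_of_adj he⟩

theorem exists_isMEGSet_ncard_eq_meg [Fintype V] (G : SimpleGraph V) :
    ∃ M : Set V, IsMEGSet G M ∧ M.ncard = meg G := by
  obtain ⟨M, hM, hcard⟩ :=
    Nat.sInf_mem (s := {n | ∃ M : Finset V, IsMEGSet G ↑M ∧ M.card = n})
      ⟨_, Finset.univ, by simpa using isMEGSet_univ, rfl⟩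
  exact ⟨M, hM, by rw [Set.ncard_coe_finset, hcard]; rfl⟩

theorem meg_le_ncard [Fintype V] {M : Set V} (hM : IsMEGSet G M) : meg G ≤ M.ncard :=
  Nat.sInf_le ⟨M.toFinite.toFinset, by simpa using hM, (Set.ncard_eq_toFinset_card M).symm⟩

namespace SimpleGraph

def IsGeodesicallyConvex (G : SimpleGraph V) (s : Set V) : Prop :=
  ∀ ⦃u v : V⦄ (p : G.Walk u v), p.length = G.dist u v → u ∈ s → v ∈ s →
    ∀ x ∈ p.support, x ∈ s

namespace IsGeodesicallyConvex

variable {s : Set V} (hs : G.IsGeodesicallyConvex s) {u v : s}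
include hs

theorem exists_induce_walk (p : G.Walk u v) (hp : p.length = G.dist u v) :
    ∃ q : (G.induce s).Walk u v, q.map (Embedding.induce s).toHom = p :=
  ⟨p.induce s (hs p hp u.2 v.2), p.map_induce _⟩

theorem reachable_induce_iff : (G.induce s).Reachable u v ↔ G.Reachable u v := by
  refine ⟨fun h => h.map (Embedding.induce s).toHom, fun h => ?_⟩
  obtain ⟨p, hp⟩ := h.exists_walk_length_eq_dist
  obtain ⟨q, -⟩ := hs.exists_induce_walk p hp
  exact q.reachable

theorem dist_induce : (G.induce s).dist u v = G.dist u v := by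
  by_cases h : G.Reachable u v
  · obtain ⟨p, hp⟩ := h.exists_walk_length_eq_dist
    obtain ⟨q, hq⟩ := hs.exists_induce_walk p hp
    obtain ⟨q', hq'⟩ := (hs.reachable_induce_iff.2 h).exists_walk_length_eq_dist
    have h₁ : (G.induce s).dist u v ≤ p.length :=
      hq ▸ (dist_le q).trans_eq (q.length_map _).symm
    have h₂ : G.dist u v ≤ q'.length :=
      (dist_le (q'.map (Embedding.induce s).toHom)).trans_eq (q'.length_map _)
    omega
  · rw [dist_eq_zero_of_not_reachable h,
      dist_eq_zero_of_not_reachable (mt hs.reachable_induce_iff.1 h)]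

theorem monitors_induce_iff {e : Sym2 s} :
    Monitors (G.induce s) u v e ↔ Monitors G u v (e.map (↑)) := by
  have hmem (q : (G.induce s).Walk u v) :
      e.map (↑) ∈ (q.map (Embedding.induce s).toHom).edges ↔ e ∈ q.edges := by
    rw [Walk.edges_map]
    exact List.mem_map_of_injective (Sym2.map.injective Subtype.val_injective)
  refine ⟨fun ⟨hr, hm⟩ => ⟨hs.reachable_induce_iff.1 hr, fun p hp => ?_⟩,
    fun ⟨hr, hm⟩ => ⟨hs.reachable_induce_iff.2 hr, fun q hq => ?_⟩⟩
  · obtain ⟨q, rfl⟩ := hs.exists_induce_walk p hp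
    exact (hmem q).2 (hm q (by rw [hs.dist_induce, ← hp]; exact (q.length_map _).symm))
  · exact (hmem q).1 (hm _ ((q.length_map _).trans (by rw [hq, hs.dist_induce])))

theorem exists_monitors_of_isMEGSet_induce {M : Set s} (hM : IsMEGSet (G.induce s) M)
    {a b : V} (hab : G.Adj a b) (ha : a ∈ s) (hb : b ∈ s) :
    ∃ u ∈ (↑) '' M, ∃ v ∈ (↑) '' M, Monitors G u v s(a, b) := by
  obtain ⟨u, hu, v, hv, huv⟩ := hM s(⟨a, ha⟩, ⟨b, hb⟩) hab
  exact ⟨u, ⟨u, hu, rfl⟩, v, ⟨v, hv, rfl⟩, hs.monitors_induce_iff.1 huv⟩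

end IsGeodesicallyConvex

/-- `G` is the clique-sum of `G[s]` and `G[t]` along the clique `s ∩ t`. -/
structure IsCliqueSum (G : SimpleGraph V) (s t : Set V) : Prop where
  union_eq_univ : s ∪ t = Set.univ
  isClique_inter : G.IsClique (s ∩ t)
  not_adj : ∀ ⦃u v : V⦄, u ∈ s → u ∉ t → v ∈ t → v ∉ s → ¬ G.Adj u v

namespace IsCliqueSum

variable {s t : Set V} (h : G.IsCliqueSum s t)
include h

theorem symm : G.IsCliqueSum t s where
  union_eq_univ := by rw [Set.union_comm, h.union_eq_univ]
  isClique_inter := by rw [Set.inter_comm]; exact h.isClique_inter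
  not_adj _ _ hu hus hv hvt huv := h.not_adj hv hvt hu hus huv.symm

theorem mem_right_of_notMem_left {x : V} (hx : x ∉ s) : x ∈ t := by
  have := h.union_eq_univ ▸ Set.mem_univ x
  exact this.resolve_left hx

theorem mem_right_of_adj {u v : V} (hu : u ∈ s) (hv : v ∉ s) (huv : G.Adj u v) : u ∈ t :=
  by_contra fun hut => h.not_adj hu hut (h.mem_right_of_notMem_left hv) hv huv

theorem mem_left_or_mem_right_of_adj {a b : V} (hab : G.Adj a b) :
    (a ∈ s ∧ b ∈ s) ∨ (a ∈ t ∧ b ∈ t) := by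
  by_cases ha : a ∈ s <;> by_cases hb : b ∈ s
  · exact .inl ⟨ha, hb⟩
  · exact .inr ⟨h.mem_right_of_adj ha hb hab, h.mem_right_of_notMem_left hb⟩
  · exact .inr ⟨h.mem_right_of_notMem_left ha, h.mem_right_of_adj hb ha hab.symm⟩
  · exact .inr ⟨h.mem_right_of_notMem_left ha, h.mem_right_of_notMem_left hb⟩

theorem exists_walk_length_lt {u x : V} (q : G.Walk u x) (hu : u ∈ s) (hx : x ∉ s) :
    ∃ c ∈ s ∩ t, ∃ r : G.Walk u c, r.length < q.length := by
  induction q with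
  | nil => exact absurd hu hx
  | @cons u w x huw q ih =>
    by_cases hw : w ∈ s
    · obtain ⟨c, hc, r, hr⟩ := ih hw hx
      exact ⟨c, hc, .cons huw r, by simpa using hr⟩
    · exact ⟨u, ⟨hu, h.mem_right_of_adj hu hw huw⟩, .nil, by simp⟩

theorem dist_le_one {c c' : V} (hc : c ∈ s ∩ t) (hc' : c' ∈ s ∩ t) : G.dist c c' ≤ 1 := by
  rcases eq_or_ne c c' with rfl | hne
  · simp
  · exact (dist_eq_one_iff_adj.2 (h.isClique_inter hc hc' hne)).le

theorem isGeodesicallyConvex : G.IsGeodesicallyConvex s := by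
  classical
  intro u v p hp hu hv x hx
  by_contra hxs
  obtain ⟨c, hc, r, hr⟩ := h.exists_walk_length_lt (p.takeUntil x hx) hu hxs
  obtain ⟨c', hc', r', hr'⟩ := h.exists_walk_length_lt (p.dropUntil x hx).reverse hv hxs
  have hsplit := congrArg Walk.length (p.take_spec hx)
  rw [Walk.length_append] at hsplit
  rw [Walk.length_reverse] at hr'
  have h₁ := r.reachable.dist_triangle_left v
  have h₂ := r'.reachable.symm.dist_triangle_right c
  have h₃ := dist_le r
  have h₄ := dist_le r'
  have h₅ := h.dist_le_one hc hc'
  rw [dist_comm] at h₄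
  -- the walk `u ⇝ c ⇝ c' ⇝ v` through the clique is shorter than the geodesic `p`
  omega

theorem exists_append_notMem_edges {u v : V} {e : Sym2 V} (p : G.Walk u v) (hu : u ∉ s)
    (he : e ∈ p.edges) (hes : ∀ y ∈ e, y ∈ s) :
    ∃ c ∈ s ∩ t, ∃ (p₁ : G.Walk u c) (p₂ : G.Walk c v),
      p = p₁.append p₂ ∧ e ∉ p₁.edges := by
  induction p with
  | nil => simp at he
  | @cons u w v huw q ih =>
    have hne : e ≠ s(u, w) := fun heq => hu (hes u (heq ▸ Sym2.mem_mk_left u w))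
    have heq : e ∈ q.edges := by simpa [hne] using he
    by_cases hw : w ∈ s
    · refine ⟨w, ⟨hw, h.mem_right_of_adj hw hu huw.symm⟩, .cons huw .nil, q, by simp, ?_⟩
      simpa
    · obtain ⟨c, hc, p₁, p₂, rfl, hp₁⟩ := ih hw heq
      exact ⟨c, hc, .cons huw p₁, p₂, by simp, by simpa [hne] using hp₁⟩

theorem exists_monitors_mem_inter {u v : V} {e : Sym2 V} (hm : Monitors G u v e) (hu : u ∉ s)
    (hes : ∀ y ∈ e, y ∈ s) : ∃ c ∈ s ∩ t, Monitors G c v e := by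
  obtain ⟨p, hp⟩ := hm.1.exists_walk_length_eq_dist
  obtain ⟨c, hc, p₁, p₂, rfl, he⟩ := h.exists_append_notMem_edges p hu (hm.2 p hp) hes
  exact ⟨c, hc, hm.of_append p₁ p₂ hp he⟩

theorem exists_monitors_mem_left {M : Set V} {u v : V} {e : Sym2 V} (hm : Monitors G u v e)
    (huM : u ∈ M) (hes : ∀ y ∈ e, y ∈ s) :
    ∃ u' ∈ s, u' ∈ M ∪ t ∧ Monitors G u' v e := by
  by_cases hu : u ∈ s
  · exact ⟨u, hu, .inl huM, hm⟩
  · obtain ⟨c, ⟨hcs, hct⟩, hc⟩ := h.exists_monitors_mem_inter hm hu hes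
    exact ⟨c, hcs, .inr hct, hc⟩

theorem isMEGSet_induce {M : Set V} (hM : IsMEGSet G M) :
    IsMEGSet (G.induce s) ((↑) ⁻¹' (M ∪ t)) := by
  intro e he
  induction e using Sym2.ind with
  | _ a b =>
    have hes : ∀ y ∈ s(a.1, b.1), y ∈ s := by simp
    obtain ⟨u, huM, v, hvM, huv⟩ := hM s(a.1, b.1) he
    obtain ⟨u', hu's, hu'M, hu'⟩ := h.exists_monitors_mem_left huv huM hes
    obtain ⟨v', hv's, hv'M, hv'⟩ := h.exists_monitors_mem_left hu'.symm hvM hes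
    exact ⟨⟨u', hu's⟩, hu'M, ⟨v', hv's⟩, hv'M,
      h.isGeodesicallyConvex.monitors_induce_iff.2 hv'.symm⟩

theorem isMEGSet_image_union {M₁ : Set s} {M₂ : Set t} (h₁ : IsMEGSet (G.induce s) M₁)
    (h₂ : IsMEGSet (G.induce t) M₂) : IsMEGSet G ((↑) '' M₁ ∪ (↑) '' M₂) := by
  intro e he
  induction e using Sym2.ind with
  | _ a b =>
    rcases h.mem_left_or_mem_right_of_adj he with ⟨ha, hb⟩ | ⟨ha, hb⟩
    · obtain ⟨u, hu, v, hv, huv⟩ :=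
        h.isGeodesicallyConvex.exists_monitors_of_isMEGSet_induce h₁ he ha hb
      exact ⟨u, .inl hu, v, .inl hv, huv⟩
    · obtain ⟨u, hu, v, hv, huv⟩ :=
        h.symm.isGeodesicallyConvex.exists_monitors_of_isMEGSet_induce h₂ he ha hb
      exact ⟨u, .inr hu, v, .inr hv, huv⟩

variable [Fintype V] [Fintype s] [Fintype t]

theorem meg_le_meg_induce_add_meg_induce : meg G ≤ meg (G.induce s) + meg (G.induce t) := by
  obtain ⟨M₁, hM₁, hcard₁⟩ := exists_isMEGSet_ncard_eq_meg (G.induce s)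
  obtain ⟨M₂, hM₂, hcard₂⟩ := exists_isMEGSet_ncard_eq_meg (G.induce t)
  calc meg G ≤ ((↑) '' M₁ ∪ (↑) '' M₂ : Set V).ncard :=
        meg_le_ncard (h.isMEGSet_image_union hM₁ hM₂)
    _ ≤ ((↑) '' M₁ : Set V).ncard + ((↑) '' M₂ : Set V).ncard := Set.ncard_union_le _ _
    _ = meg (G.induce s) + meg (G.induce t) := by
      rw [Set.ncard_image_of_injective _ Subtype.val_injective,
        Set.ncard_image_of_injective _ Subtype.val_injective, hcard₁, hcard₂]

theorem meg_induce_add_meg_induce_le :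
    meg (G.induce s) + meg (G.induce t) ≤ meg G + 2 * (s ∩ t).ncard := by
  obtain ⟨M, hM, hcard⟩ := exists_isMEGSet_ncard_eq_meg G
  have hs := meg_le_ncard (h.isMEGSet_induce hM)
  have ht := meg_le_ncard (h.symm.isMEGSet_induce hM)
  rw [← Set.ncard_image_of_injective _ Subtype.val_injective, Subtype.image_preimage_coe] at hs ht
  have hunion : s ∩ (M ∪ t) ∪ t ∩ (M ∪ s) = M ∪ s ∩ t := by
    ext x
    have := h.mem_right_of_notMem_left (x := x)
    simp only [Set.mem_union, Set.mem_inter_iff]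
    tauto
  have hinter : s ∩ (M ∪ t) ∩ (t ∩ (M ∪ s)) = s ∩ t := by
    ext x; simp only [Set.mem_union, Set.mem_inter_iff]; tauto
  have hsum := Set.ncard_union_add_ncard_inter (s ∩ (M ∪ t)) (t ∩ (M ∪ s))
  rw [hunion, hinter] at hsum
  have hM_union := Set.ncard_union_le M (s ∩ t)
  omega

end IsCliqueSum

end SimpleGraph

end CliqueSum

theorem meg_clique_sum_general {V : Type*} [Fintype V] [DecidableEq V] (G : SimpleGraph V)
    (k : ℕ) (V₁ V₂ : Finset V)
    (hcover : V₁ ∪ V₂ = Finset.univ)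
    (hcard : (V₁ ∩ V₂).card = k)
    (hclique : G.IsClique ↑(V₁ ∩ V₂))
    (hnoedge : ∀ u v : V, u ∈ V₁ → u ∉ V₂ → v ∈ V₂ → v ∉ V₁ → ¬ G.Adj u v) :
    (meg (G.induce ↑V₁) : ℤ) + meg (G.induce ↑V₂) - 2 * k ≤ meg G ∧
      meg G ≤ meg (G.induce ↑V₁) + meg (G.induce ↑V₂) := by
  have h : G.IsCliqueSum ↑V₁ ↑V₂ :=
    { union_eq_univ := by rw [← Finset.coe_union, hcover, Finset.coe_univ]
      isClique_inter := by rwa [← Finset.coe_inter]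
      not_adj := hnoedge }
  have hk : (↑V₁ ∩ ↑V₂ : Set V).ncard = k := by
    rw [← Finset.coe_inter, Set.ncard_coe_finset, hcard]
  have hlower := h.meg_induce_add_meg_induce_le
  exact ⟨by omega, h.meg_le_meg_induce_add_meg_induce⟩

/-- if `G` is a `k`-clique-sum of `G₁ = G[V₁]` and `G₂ = G[V₂]` (with `k ≥ 2`),
then `meg G₁ + meg G₂ - 2k ≤ meg G ≤ meg G₁ + meg G₂`. -/
theorem meg_clique_sum {V : Type*} [Fintype V] [DecidableEq V] (G : SimpleGraph V)
    (k : ℕ) (hk : 2 ≤ k) (V₁ V₂ : Finset V)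
    (hcover : V₁ ∪ V₂ = Finset.univ)
    (hcard : (V₁ ∩ V₂).card = k)
    (hclique : G.IsClique ↑(V₁ ∩ V₂))
    (hnoedge : ∀ u v : V, u ∈ V₁ → u ∉ V₂ → v ∈ V₂ → v ∉ V₁ → ¬ G.Adj u v) :
    (meg (G.induce ↑V₁) : ℤ) + meg (G.induce ↑V₂) - 2 * k ≤ meg G ∧
      meg G ≤ meg (G.induce ↑V₁) + meg (G.induce ↑V₂) :=
  meg_clique_sum_general G k V₁ V₂ hcover hcard hclique hnoedge
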